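/- Let a > 0 and set ω = √(5/(4a³)). Define q1(t) = a R(ωt) e, q2(t) = 0, q3(t) = −a R(ωt) e, where e = (1, 0) and R(θ) is the rotation of ℝ² by angle θ. Then q1, q2, q3 form a solution of the planar three-body problem with equal masses m1 = m2 = m3 = 1, and all three mutual distances are constant: ‖q_1(t) − q_2(t)‖ = ‖q_2(t) − q_3(t)‖ = a and ‖q_1(t) − q_3(t)‖ = 2a for all t. In particular, a collinear (Euler) relative equilibrium exists. -/

import Mathlib

/-- Rotation of the plane by angle `θ`. -/
noncomputable def planeRot (θ : ℝ) (p : EuclideanSpace ℝ (Fin 2)) :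
    EuclideanSpace ℝ (Fin 2) :=
  (WithLp.equiv 2 (Fin 2 → ℝ)).symm
    ![Real.cos θ * p 0 - Real.sin θ * p 1, Real.sin θ * p 0 + Real.cos θ * p 1]

/-!
The three bodies stay on the line spanned by the unit vector `u t = R(ωt) e`, at `a • u t`, `0`
and `-a • u t`. Since `R(ωt) p = cos (ωt) • p + sin (ωt) • R(π/2) p`, every curve
`t ↦ r • u t` satisfies `x'' = -ω² x`, and every mutual attraction is a multiple of `u t` as
well, so Newton's equations reduce to scalar identities: `0 = 0` for the centre and
`a ω² = 1/a² + 1/(4a²)` for the outer bodies, which is the choice `ω² = 5/(4a³)`.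
-/

open Real

lemma planeRot_smul (θ c : ℝ) (p : EuclideanSpace ℝ (Fin 2)) :
    planeRot θ (c • p) = c • planeRot θ p := by
  ext i
  fin_cases i <;> simp [planeRot, mul_sub, mul_add, mul_left_comm]

lemma planeRot_eq_cos_smul_add_sin_smul (θ : ℝ) (p : EuclideanSpace ℝ (Fin 2)) :
    planeRot θ p = cos θ • p + sin θ • planeRot (π / 2) p := by
  ext i
  fin_cases i <;> simp [planeRot, sub_eq_add_neg, add_comm]

lemma norm_planeRot (θ : ℝ) (p : EuclideanSpace ℝ (Fin 2)) : ‖planeRot θ p‖ = ‖p‖ := by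
  simp only [EuclideanSpace.norm_eq, planeRot, Fin.sum_univ_two]
  congr 1
  simp only [WithLp.equiv_symm_apply, Matrix.cons_val_zero, Matrix.cons_val_one,
    Matrix.cons_val_fin_one, norm_eq_abs, sq_abs]
  linear_combination (p 0 ^ 2 + p 1 ^ 2) * sin_sq_add_cos_sq θ

section HarmonicOscillator

variable {E : Type*} [NormedAddCommGroup E] [NormedSpace ℝ E]

lemma hasDerivAt_cos_mul_smul_add_sin_mul_smul (ω : ℝ) (p v : E) (t : ℝ) :
    HasDerivAt (fun t => cos (ω * t) • p + sin (ω * t) • v)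
      (cos (ω * t) • (ω • v) + sin (ω * t) • -(ω • p)) t := by
  have hc := ((hasDerivAt_id t).const_mul ω).cos.smul_const p
  have hs := ((hasDerivAt_id t).const_mul ω).sin.smul_const v
  refine (hc.add hs).congr_deriv ?_
  simp only [id, mul_one]
  module

lemma deriv_deriv_cos_mul_smul_add_sin_mul_smul (ω : ℝ) (p v : E) (t : ℝ) :
    deriv (deriv fun t => cos (ω * t) • p + sin (ω * t) • v) t =
      -(ω ^ 2) • (cos (ω * t) • p + sin (ω * t) • v) := by
  have hderiv : deriv (fun t => cos (ω * t) • p + sin (ω * t) • v) =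
      fun t => cos (ω * t) • (ω • v) + sin (ω * t) • -(ω • p) :=
    funext fun t => (hasDerivAt_cos_mul_smul_add_sin_mul_smul ω p v t).deriv
  rw [hderiv, (hasDerivAt_cos_mul_smul_add_sin_mul_smul ω (ω • v) (-(ω • p)) t).deriv]
  module

end HarmonicOscillator

lemma deriv_deriv_planeRot_mul (ω : ℝ) (p : EuclideanSpace ℝ (Fin 2)) (t : ℝ) :
    deriv (deriv fun t => planeRot (ω * t) p) t = -(ω ^ 2) • planeRot (ω * t) p := by
  simpa only [← planeRot_eq_cos_smul_add_sin_smul] using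
    deriv_deriv_cos_mul_smul_add_sin_mul_smul ω p (planeRot (π / 2) p) t

/-- The Euler collinear relative equilibrium for equal masses: with
`ω = √(5/(4a³))`, the bodies at `a R(ωt) e`, `0`, `−a R(ωt) e` (where
`e = (1,0)`) form a solution of the equal-mass planar three-body problem in
which all three mutual distances are constant. -/
theorem euler_collinear_relative_equilibrium
    (a : ℝ) (ha : 0 < a) (ω : ℝ) (hω : ω = Real.sqrt (5 / (4 * a ^ 3)))
    (e : EuclideanSpace ℝ (Fin 2))
    (he : e = (WithLp.equiv 2 (Fin 2 → ℝ)).symm ![1, 0])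
    (q1 q2 q3 : ℝ → EuclideanSpace ℝ (Fin 2))
    (hq1 : q1 = fun t => a • planeRot (ω * t) e)
    (hq2 : q2 = fun _ => 0)
    (hq3 : q3 = fun t => -(a • planeRot (ω * t) e)) :
    (∀ t, q1 t ≠ q2 t) ∧ (∀ t, q1 t ≠ q3 t) ∧ (∀ t, q2 t ≠ q3 t) ∧
    (∀ t, deriv (deriv q1) t =
      (‖q2 t - q1 t‖ ^ 3)⁻¹ • (q2 t - q1 t) +
        (‖q3 t - q1 t‖ ^ 3)⁻¹ • (q3 t - q1 t)) ∧
    (∀ t, deriv (deriv q2) t =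
      (‖q1 t - q2 t‖ ^ 3)⁻¹ • (q1 t - q2 t) +
        (‖q3 t - q2 t‖ ^ 3)⁻¹ • (q3 t - q2 t)) ∧
    (∀ t, deriv (deriv q3) t =
      (‖q1 t - q3 t‖ ^ 3)⁻¹ • (q1 t - q3 t) +
        (‖q2 t - q3 t‖ ^ 3)⁻¹ • (q2 t - q3 t)) ∧
    (∀ t, ‖q1 t - q2 t‖ = a) ∧ (∀ t, ‖q2 t - q3 t‖ = a) ∧
    (∀ t, ‖q1 t - q3 t‖ = 2 * a) := by
  set u : ℝ → EuclideanSpace ℝ (Fin 2) := fun t => planeRot (ω * t) e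
  have hu : ∀ t, ‖u t‖ = 1 := fun t => by
    rw [norm_planeRot, he]; simp [EuclideanSpace.norm_eq]
  have hacc : ∀ r t, deriv (deriv fun t => r • u t) t = (-(ω ^ 2) * r) • u t := fun r t => by
    simp only [u, ← planeRot_smul, deriv_deriv_planeRot_mul, smul_smul, mul_comm]
  have hω2 : ω ^ 2 = 5 / (4 * a ^ 3) := by
    rw [hω]; exact Real.sq_sqrt (by positivity)
  obtain rfl : q1 = fun t => a • u t := hq1
  obtain rfl : q2 = fun t => (0 : ℝ) • u t := by simp [hq2]
  obtain rfl : q3 = fun t => (-a) • u t := by simp [hq3, u]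
  have hinj : ∀ t (r s : ℝ), r • u t = s • u t ↔ r = s := fun t r s =>
    smul_left_inj (norm_ne_zero_iff.1 (by rw [hu]; exact one_ne_zero))
  simp only [hacc, ← sub_smul, smul_smul, ← add_smul, norm_smul, hu, mul_one, Real.norm_eq_abs,
    hinj, ne_eq, forall_const]
  rw [show a - -a = 2 * a by ring, show -a - a = -(2 * a) by ring]
  simp only [sub_zero, zero_sub, neg_neg, abs_neg, abs_of_pos ha,
    abs_of_pos (by positivity : 0 < 2 * a), and_true]
  refine ⟨ha.ne', by linarith, by linarith, ?_, by ring, ?_⟩ <;>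
    · rw [hω2]
      field_simp
      ring
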